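/- arXiv:2403.06780 — 3 statements merged into one kernel-verified Lean document; each statement's English description precedes it below -/
import Mathlib

section
/- Let U be a finite nonempty set of tasks, and for each i in U let τ_i ≥ 0 be its minimum forward setup time and μ_i ≥ 0 its minimum backward setup time. Let κ, m̄, m_ be natural numbers with κ ≤ m̄. If in any completion each remaining station incurs at least min_{i∈U} μ_i as backward setup on each of the max(m_ − κ, 0) definitely-used future stations, and all other setups are forward setups each at least τ_i for the task i they precede, and at most m̄ − κ setups are 'saved' (each of value at most max_{i∈U} τ_i), then the total setup time δ of any completion satisfies δ ≥ Σ_{i∈U} τ_i − (m̄ − κ)·max_{i∈U} τ_i + max(m_ − κ, 0)·min_{i∈U} μ_i. -/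
/-! The successors `σ i` of the non-last tasks `i ∈ U \ S` are distinct tasks of `U`, so their
forward setups pay `τ` on all of `U` except `#S` tasks, each of which costs at most `max τ`.
The `#S` backward setups pay at least `min μ` each, and `#S` lies between `max (m_ - κ) 0`
and `m̄ - κ`. -/

open Finset

theorem Finset.sum_le_sum_comp_add_card_sub_nsmul_sup' {ι M : Type*} [DecidableEq ι]
    [AddCommMonoid M] [LinearOrder M] [IsOrderedAddMonoid M]
    {s t : Finset ι} (hs : s.Nonempty) (f : ι → M) {g : ι → ι}
    (hg : ∀ i ∈ t, g i ∈ s) (hinj : Set.InjOn g t) :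
    ∑ i ∈ s, f i ≤ ∑ i ∈ t, f (g i) + (#s - #t) • s.sup' hs f := by
  have himage : t.image g ⊆ s := by
    simpa only [image_subset_iff] using hg
  have hcard : #(s \ t.image g) = #s - #t := by
    rw [card_sdiff_of_subset himage, card_image_of_injOn hinj]
  calc ∑ i ∈ s, f i = ∑ i ∈ t.image g, f i + ∑ i ∈ s \ t.image g, f i := by
        rw [add_comm, sum_sdiff himage]
    _ ≤ ∑ i ∈ t, f (g i) + (#s - #t) • s.sup' hs f := by
        rw [sum_image hinj, ← hcard]
        gcongr
        exact sum_le_card_nsmul _ _ _ fun i hi => le_sup' f (mem_sdiff.mp hi).1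

theorem stmt0_general {ι : Type*} [DecidableEq ι] (U : Finset ι) (hU : U.Nonempty)
    (τ μ δ : ι → ℝ) (hτ : ∀ i ∈ U, 0 ≤ τ i) (hμ : ∀ i ∈ U, 0 ≤ μ i)
    (κ mUB mLB : ℕ)
    (S : Finset ι) (hSU : S ⊆ U) (hScard : S.card ≤ mUB - κ)
    (hSmin : max (mLB - κ) 0 ≤ S.card)
    (σ : ι → ι) (hσmem : ∀ i ∈ U \ S, σ i ∈ U)
    (hσinj : ∀ i ∈ U \ S, ∀ j ∈ U \ S, σ i = σ j → i = j)
    (hfwd : ∀ i ∈ U \ S, τ (σ i) ≤ δ i)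
    (hbwd : ∀ i ∈ S, U.inf' hU μ ≤ δ i) :
    (∑ i ∈ U, τ i) - ((mUB - κ : ℕ) : ℝ) * (U.sup' hU τ)
      + ((max (mLB - κ) 0 : ℕ) : ℝ) * (U.inf' hU μ) ≤ ∑ i ∈ U, δ i := by
  obtain ⟨i₀, hi₀⟩ := hU
  have hsup : 0 ≤ U.sup' ⟨i₀, hi₀⟩ τ := (hτ i₀ hi₀).trans (le_sup' τ hi₀)
  have hinf : 0 ≤ U.inf' ⟨i₀, hi₀⟩ μ := le_inf' _ μ hμ
  have hcard : #U - #(U \ S) = #S := by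
    rw [card_sdiff_of_subset hSU]
    have := card_le_card hSU
    omega
  have hτ_sum := U.sum_le_sum_comp_add_card_sub_nsmul_sup' ⟨i₀, hi₀⟩ τ hσmem hσinj
  rw [hcard, nsmul_eq_mul] at hτ_sum
  have hδ_last : (#S : ℝ) * U.inf' ⟨i₀, hi₀⟩ μ ≤ ∑ i ∈ S, δ i := by
    rw [← nsmul_eq_mul]
    exact card_nsmul_le_sum _ _ _ hbwd
  calc (∑ i ∈ U, τ i) - ((mUB - κ : ℕ) : ℝ) * U.sup' ⟨i₀, hi₀⟩ τ
        + ((max (mLB - κ) 0 : ℕ) : ℝ) * U.inf' ⟨i₀, hi₀⟩ μ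
      ≤ (∑ i ∈ U, τ i) - (#S : ℝ) * U.sup' ⟨i₀, hi₀⟩ τ + (#S : ℝ) * U.inf' ⟨i₀, hi₀⟩ μ := by
        gcongr
    _ ≤ ∑ i ∈ U \ S, δ i + ∑ i ∈ S, δ i := by
        linarith [sum_le_sum hfwd]
    _ = ∑ i ∈ U, δ i := sum_sdiff hSU

/-- Lower bound on the total setup time of any completion in SUALBP-1.
`U` is the finite nonempty set of unscheduled tasks, `τ i` / `μ i` are the minimum
forward / backward setup times to task `i`, `κ ≤ mUB` the current station index
(`mUB` = upper bound `m̄`, `mLB` = lower bound `m_` on the number of stations).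
A completion is modeled by: the per-task setups `δ i`; a set `S ⊆ U` of
"last-on-station" tasks (at most `mUB - κ` of them, each receiving a backward setup
of value at least `min_{i∈U} μ i`, and at least `max(mLB - κ, 0)` of them exist);
all other tasks `i ∈ U \ S` receive a forward setup of value at least `τ (σ i)` for
their successor `σ i ∈ U`, with `σ` injective on `U \ S`.  Then the total setup time
`δ = Σ_{i∈U} δ i` is at least
`Σ_{i∈U} τ i − (mUB − κ)·max_{i∈U} τ i + max(mLB − κ, 0)·min_{i∈U} μ i`. -/
theorem stmt0 {ι : Type*} [DecidableEq ι] (U : Finset ι) (hU : U.Nonempty)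
    (τ μ δ : ι → ℝ) (hτ : ∀ i ∈ U, 0 ≤ τ i) (hμ : ∀ i ∈ U, 0 ≤ μ i)
    (hδ : ∀ i ∈ U, 0 ≤ δ i)
    (κ mUB mLB : ℕ) (hκ : κ ≤ mUB)
    (S : Finset ι) (hSU : S ⊆ U) (hScard : S.card ≤ mUB - κ)
    (hSmin : max (mLB - κ) 0 ≤ S.card)
    (σ : ι → ι) (hσmem : ∀ i ∈ U \ S, σ i ∈ U)
    (hσinj : ∀ i ∈ U \ S, ∀ j ∈ U \ S, σ i = σ j → i = j)
    (hfwd : ∀ i ∈ U \ S, τ (σ i) ≤ δ i)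
    (hbwd : ∀ i ∈ S, U.inf' hU μ ≤ δ i) :
    (∑ i ∈ U, τ i) - ((mUB - κ : ℕ) : ℝ) * (U.sup' hU τ)
      + ((max (mLB - κ) 0 : ℕ) : ℝ) * (U.inf' hU μ) ≤ ∑ i ∈ U, δ i :=
  stmt0_general U hU τ μ δ hτ hμ κ mUB mLB S hSU hScard hSmin σ hσmem hσinj hfwd hbwd
end

section
/- Validity of the three-valued knapsack dual bound: let c > 0 and assign each task i with t_i ∈ (0, c] the weight w_i³ = 0 for t_i ∈ (0, c/3), 1/3 for t_i = c/3, 1/2 for t_i ∈ (c/3, 2c/3), 2/3 for t_i = 2c/3, and 1 for t_i ∈ (2c/3, c]. Then in any partition of a finite task set U into stations each of total time at most c, every station has total weight at most 1, and hence the number of stations is at least ⌈Σ_{i∈U} w_i³⌉. -/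
open Classical in
/-- Weight function `w³` from Table 2 (Scholl and Klein 1997):
`0` on `(0, c/3)`, `1/3` at `c/3`, `1/2` on `(c/3, 2c/3)`, `2/3` at `2c/3`,
and `1` on `(2c/3, c]`. -/
noncomputable def w3 (c x : ℝ) : ℝ :=
  if x < c / 3 then 0
  else if x = c / 3 then 1 / 3
  else if x < 2 * c / 3 then 1 / 2
  else if x = 2 * c / 3 then 2 / 3
  else 1

lemma w3_nonneg (c x : ℝ) : 0 ≤ w3 c x := by
  unfold w3; split_ifs <;> norm_num

lemma w3_le_one (c x : ℝ) : w3 c x ≤ 1 := by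
  unfold w3; split_ifs <;> norm_num

lemma w3_eq_zero {c x : ℝ} (h : x < c / 3) : w3 c x = 0 := by
  unfold w3; rw [if_pos h]

lemma w3_le_half {c x : ℝ} (h : x < 2 * c / 3) : w3 c x ≤ 1 / 2 := by
  unfold w3; split_ifs <;> first | norm_num | linarith

lemma w3_third {c : ℝ} (hc : 0 < c) : w3 c (c / 3) = 1 / 3 := by
  unfold w3; rw [if_neg (lt_irrefl _), if_pos rfl]

lemma w3_two_third {c : ℝ} (hc : 0 < c) : w3 c (2 * c / 3) = 2 / 3 := by
  unfold w3
  rw [if_neg (by linarith), if_neg (by intro h; linarith), if_neg (lt_irrefl _),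
    if_pos rfl]

lemma w3_pair {c x y : ℝ} (hc : 0 < c) (hx : c / 3 ≤ x) (hy : c / 3 ≤ y)
    (hxy : x + y ≤ c) : w3 c x + w3 c y ≤ 1 := by
  rcases lt_trichotomy x (2 * c / 3) with h1 | h1 | h1
  · rcases lt_trichotomy y (2 * c / 3) with h2 | h2 | h2
    · have := w3_le_half h1; have := w3_le_half h2; linarith
    · have hx' : x = c / 3 := by linarith
      rw [hx', h2, w3_third hc, w3_two_third hc]; norm_num
    · linarith
  · have hy' : y = c / 3 := by linarith
    rw [hy', h1, w3_third hc, w3_two_third hc]; norm_num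
  · linarith

lemma w3_station {ι : Type*} (c : ℝ) (hc : 0 < c) (S : Finset ι) (t : ι → ℝ)
    (ht : ∀ i ∈ S, 0 < t i) (hsum : ∑ i ∈ S, t i ≤ c) :
    ∑ i ∈ S, w3 c (t i) ≤ 1 := by
  classical
  set F := S.filter (fun i => c / 3 ≤ t i) with hF
  have hFsub : F ⊆ S := Finset.filter_subset _ _
  have hsumF : ∑ i ∈ F, t i ≤ c := by
    refine le_trans (Finset.sum_le_sum_of_subset_of_nonneg hFsub ?_) hsum
    intro i hi _; exact (ht i hi).le
  have hmem : ∀ i ∈ F, c / 3 ≤ t i := by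
    intro i hi; exact (Finset.mem_filter.mp hi).2
  have hsplit : ∑ i ∈ S, w3 c (t i) = ∑ i ∈ F, w3 c (t i) := by
    rw [hF, Finset.sum_filter_add_sum_filter_not S (fun i => c / 3 ≤ t i)
      (fun i => w3 c (t i)) |>.symm]
    have : ∑ i ∈ S.filter (fun i => ¬ c / 3 ≤ t i), w3 c (t i) = 0 := by
      apply Finset.sum_eq_zero
      intro i hi
      exact w3_eq_zero (not_le.mp (Finset.mem_filter.mp hi).2)
    rw [this, add_zero]
  rw [hsplit]
  have hcard : F.card ≤ 3 := by
    by_contra h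
    push_neg at h
    have h1 : (F.card : ℝ) * (c / 3) ≤ ∑ i ∈ F, t i := by
      have := Finset.card_nsmul_le_sum F t (c / 3) hmem
      simpa [nsmul_eq_mul] using this
    have h2 : (4 : ℝ) ≤ (F.card : ℝ) := by exact_mod_cast h
    nlinarith
  interval_cases h : F.card
  · rw [Finset.card_eq_zero.mp h]; simp
  · obtain ⟨i, hi⟩ := Finset.card_eq_one.mp h
    rw [hi, Finset.sum_singleton]; exact w3_le_one c (t i)
  · obtain ⟨i, j, hij, hij2⟩ := Finset.card_eq_two.mp h
    rw [hij2, Finset.sum_pair hij]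
    have hi : i ∈ F := by rw [hij2]; simp
    have hj : j ∈ F := by rw [hij2]; simp
    have hs : t i + t j ≤ c := by
      rw [hij2, Finset.sum_pair hij] at hsumF; exact hsumF
    exact w3_pair hc (hmem i hi) (hmem j hj) hs
  · obtain ⟨i, j, k, hij, hik, hjk, h3⟩ := Finset.card_eq_three.mp h
    have hi : i ∈ F := by rw [h3]; simp
    have hj : j ∈ F := by rw [h3]; simp
    have hk : k ∈ F := by rw [h3]; simp
    have hs : t i + t j + t k ≤ c := by
      rw [h3] at hsumF
      rw [Finset.sum_insert (by simp [hij, hik]),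
        Finset.sum_insert (by simp [hjk]), Finset.sum_singleton] at hsumF
      linarith
    have hti : t i = c / 3 := le_antisymm (by have := hmem j hj; have := hmem k hk; linarith) (hmem i hi)
    have htj : t j = c / 3 := le_antisymm (by have := hmem i hi; have := hmem k hk; linarith) (hmem j hj)
    have htk : t k = c / 3 := le_antisymm (by have := hmem i hi; have := hmem j hj; linarith) (hmem k hk)
    rw [h3, Finset.sum_insert (by simp [hij, hik]),
      Finset.sum_insert (by simp [hjk]), Finset.sum_singleton,
      hti, htj, htk, w3_third hc]
    norm_num

/-- Validity of the three-valued knapsack dual bound: in any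
partition of a finite task set `U` (with `t i ∈ (0, c]`) into `K` stations each
of total time at most `c`, every station has total `w³`-weight at most `1`, and
hence the number of stations is at least `⌈Σ_{i∈U} w³(t i)⌉`. -/
theorem stmt12 {ι : Type*} [DecidableEq ι] (U : Finset ι) (t : ι → ℝ)
    (c : ℝ) (hc : 0 < c) (ht : ∀ i ∈ U, 0 < t i ∧ t i ≤ c)
    (K : ℕ) (a : ι → ℕ) (ha : ∀ i ∈ U, a i < K)
    (hcap : ∀ k < K, ∑ i ∈ U.filter (fun i => a i = k), t i ≤ c) :
    (∀ k < K, ∑ i ∈ U.filter (fun i => a i = k), w3 c (t i) ≤ 1) ∧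
      (⌈∑ i ∈ U, w3 c (t i)⌉ : ℝ) ≤ (K : ℝ) := by
  have hst : ∀ k < K, ∑ i ∈ U.filter (fun i => a i = k), w3 c (t i) ≤ 1 := by
    intro k hk
    exact w3_station c hc _ t
      (fun i hi => (ht i (Finset.mem_filter.mp hi).1).1) (hcap k hk)
  refine ⟨hst, ?_⟩
  have hsum : ∑ i ∈ U, w3 c (t i) ≤ (K : ℝ) := by
    have hfib : ∑ k ∈ Finset.range K, ∑ i ∈ U.filter (fun i => a i = k),
        w3 c (t i) = ∑ i ∈ U, w3 c (t i) :=
      Finset.sum_fiberwise_of_maps_to (fun i hi => Finset.mem_range.mpr (ha i hi)) _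
    rw [← hfib]
    calc ∑ k ∈ Finset.range K, ∑ i ∈ U.filter (fun i => a i = k), w3 c (t i)
        ≤ ∑ k ∈ Finset.range K, 1 := by
          apply Finset.sum_le_sum
          intro k hk
          exact hst k (Finset.mem_range.mp hk)
      _ = (K : ℝ) := by simp
  have : ⌈∑ i ∈ U, w3 c (t i)⌉ ≤ (K : ℤ) := Int.ceil_le.mpr (by exact_mod_cast hsum)
  exact_mod_cast this
end

section
/- Correctness of the subproblem DIDP recursion for single-station re-sequencing: the value V(V_k, d_k, d_k) computed by recursion (20b) equals the minimum over all permutations π = (π_1, …, π_n) of V_k consistent with the precedence relation P^k of the total setup cost Σ_{l=1}^{n−1} τ_{π_l π_{l+1}} + μ_{π_n π_1}. -/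
/-- Sum of forward setup times along a list of tasks. -/
def fwdCost {ι : Type*} (τ : ι → ι → ℝ) : List ι → ℝ
  | [] => 0
  | [_] => 0
  | a :: b :: rest => τ a b + fwdCost τ (b :: rest)

/-- Total cost of a (nonempty) station sequence: forward setups along the list
plus the backward setup from the last task to the first task. -/
def seqCost {ι : Type*} (τ μ : ι → ι → ℝ) : List ι → ℝ
  | [] => 0
  | a :: rest => fwdCost τ (a :: rest) + μ ((a :: rest).getLast (by simp)) a

/-- A sequence is feasible if every predecessor appears before its successor. -/
def FeasibleSeq {ι : Type*} [DecidableEq ι] (P : ι → Finset ι) (L : List ι) : Prop :=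
  ∀ i ∈ L, ∀ j ∈ P i, L.idxOf j < L.idxOf i


/-!
Read `V U p f` as the cheapest way to finish a station when the tasks `U` are still to be
sequenced, the last task placed is `p` and the first one was `f`. By strong induction on `U`,
this is the least cost `completionCost τ μ f p L` over the precedence-ordered arrangements `L`
of `U`: such an arrangement must start with a task of `U₁ = ready P U` (none of its
predecessors is still open), and the remaining arrangement is one of `U.erase j`, so the set of
arrangements splits as a union over `j ∈ U₁` and the recursion takes the minimum over these
pieces. For duplicate-free arrangements of all of `V_k`, being precedence-ordered is the same
as being feasible, and the cost of a whole sequence `j :: L` is `completionCost τ μ j j L`.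
-/

open Set

theorem isLeast_biUnion_inf' {α β : Type*} [LinearOrder β] {s : Finset α} (hs : s.Nonempty)
    {t : α → Set β} {f : α → β} (h : ∀ i ∈ s, IsLeast (t i) (f i)) :
    IsLeast (⋃ i ∈ s, t i) (s.inf' hs f) := by
  obtain ⟨i, hi, hfi⟩ := Finset.exists_mem_eq_inf' hs f
  refine ⟨hfi ▸ mem_biUnion hi (h i hi).1, fun x hx => ?_⟩
  obtain ⟨j, hj, hxj⟩ := mem_iUnion₂.1 hx
  exact (Finset.inf'_le f hj).trans ((h j hj).2 hxj)

section Cost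

variable {ι : Type*} (τ μ : ι → ι → ℝ)

def completionCost (f : ι) : ι → List ι → ℝ
  | p, [] => μ p f
  | p, j :: L => τ p j + completionCost f j L

theorem fwdCost_add_getLast (f p : ι) (L : List ι) :
    fwdCost τ (p :: L) + μ ((p :: L).getLast (List.cons_ne_nil p L)) f =
      completionCost τ μ f p L := by
  induction L generalizing p with
  | nil => simp [fwdCost, completionCost]
  | cons j L ih => rw [completionCost, ← ih j, fwdCost, List.getLast_cons_cons, add_assoc]

theorem seqCost_cons (j : ι) (L : List ι) : seqCost τ μ (j :: L) = completionCost τ μ j j L :=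
  fwdCost_add_getLast τ μ j j L

end Cost

section Precedence

variable {ι : Type*} {P : ι → Finset ι}

/-- Unlike `FeasibleSeq`, this allows predecessors that do not occur in `L` at all, as the
subproblems on the remaining tasks `U` require. -/
def PrecOrdered (P : ι → Finset ι) (L : List ι) : Prop :=
  L.Pairwise (fun a b => b ∉ P a) ∧ ∀ i ∈ L, i ∉ P i

theorem precOrdered_cons {j : ι} {L : List ι} :
    PrecOrdered P (j :: L) ↔ (∀ k ∈ j :: L, k ∉ P j) ∧ PrecOrdered P L := by
  simp only [PrecOrdered, List.pairwise_cons, List.forall_mem_cons]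
  tauto

theorem PrecOrdered.sublist {L₁ L₂ : List ι} (h : PrecOrdered P L₂) (hs : L₁.Sublist L₂) :
    PrecOrdered P L₁ :=
  ⟨h.1.sublist hs, fun i hi => h.2 i (hs.subset hi)⟩

variable [DecidableEq ι]

theorem FeasibleSeq.subset_toFinset {L : List ι} (h : FeasibleSeq P L) :
    ∀ i ∈ L.toFinset, P i ⊆ L.toFinset := fun i hi j hj => by
  have := (h i (List.mem_toFinset.1 hi) j hj).trans_le (List.idxOf_le_length (a := i))
  exact List.mem_toFinset.2 (List.idxOf_lt_length_iff.1 this)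

theorem feasibleSeq_iff_precOrdered {L : List ι} (hnd : L.Nodup)
    (hP : ∀ i ∈ L.toFinset, P i ⊆ L.toFinset) : FeasibleSeq P L ↔ PrecOrdered P L := by
  constructor
  · intro h
    refine ⟨List.pairwise_iff_getElem.2 fun a b ha hb hab hmem => ?_,
      fun i hi hii => (h i hi i hii).false⟩
    have := h _ (L.getElem_mem ha) _ hmem
    rw [hnd.idxOf_getElem, hnd.idxOf_getElem] at this
    omega
  · rintro ⟨hpw, hself⟩ i hi j hj
    have hjL : j ∈ L := List.mem_toFinset.1 (hP i (List.mem_toFinset.2 hi) hj)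
    have hi' := List.idxOf_lt_length_iff.2 hi
    have hj' := List.idxOf_lt_length_iff.2 hjL
    rcases lt_trichotomy (L.idxOf j) (L.idxOf i) with hlt | heq | hgt
    · exact hlt
    · rw [(List.idxOf_inj hjL).1 heq] at hj
      exact absurd hj (hself i hi)
    · have := List.pairwise_iff_getElem.1 hpw _ _ hi' hj' hgt
      rw [List.getElem_idxOf, List.getElem_idxOf] at this
      exact absurd hj this

def feasibleOrders (P : ι → Finset ι) (U : Finset ι) : Set (List ι) :=
  {L | L.Nodup ∧ L.toFinset = U ∧ PrecOrdered P L}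

def ready (P : ι → Finset ι) (U : Finset ι) : Finset ι :=
  U.filter (fun j => U ∩ P j = ∅)

theorem feasibleOrders_empty : feasibleOrders P ∅ = {[]} := by
  ext L
  simp only [feasibleOrders, mem_ofPred_eq, List.toFinset_eq_empty_iff, mem_singleton_iff]
  constructor
  · exact fun h => h.2.1
  · rintro rfl
    exact ⟨List.nodup_nil, rfl, List.Pairwise.nil, by simp⟩

theorem cons_mem_feasibleOrders {U : Finset ι} {j : ι} {L : List ι} :
    j :: L ∈ feasibleOrders P U ↔ j ∈ ready P U ∧ L ∈ feasibleOrders P (U.erase j) := by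
  simp only [feasibleOrders, ready, mem_ofPred_eq, List.nodup_cons, List.toFinset_cons,
    precOrdered_cons, Finset.mem_filter, ← Finset.disjoint_iff_inter_eq_empty]
  constructor
  · rintro ⟨⟨hjL, hnd⟩, rfl, hjP, hord⟩
    refine ⟨⟨Finset.mem_insert_self _ _, Finset.disjoint_left.2 fun k hk => hjP k ?_⟩, hnd,
      (Finset.erase_insert (List.mem_toFinset.not.2 hjL)).symm, hord⟩
    simpa using hk
  · rintro ⟨⟨hjU, hjP⟩, hnd, hL, hord⟩
    have hLU : ∀ k ∈ j :: L, k ∈ U := by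
      simp +contextual [← List.mem_toFinset, hL, hjU]
    refine ⟨⟨fun hj => ?_, hnd⟩, by rw [hL, Finset.insert_erase hjU], fun k hk =>
      Finset.disjoint_left.1 hjP (hLU k hk), hord⟩
    simpa [hL] using List.mem_toFinset.2 hj

theorem feasibleOrders_eq_biUnion {U : Finset ι} (hU : U.Nonempty) :
    feasibleOrders P U = ⋃ j ∈ ready P U, List.cons j '' feasibleOrders P (U.erase j) := by
  ext (_ | ⟨j, L⟩)
  · simp [feasibleOrders, hU.ne_empty.symm]
  · simp [cons_mem_feasibleOrders, and_comm]

theorem erase_mem_feasibleOrders {U : Finset ι} {L : List ι} (hL : L ∈ feasibleOrders P U)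
    (j : ι) : L.erase j ∈ feasibleOrders P (U.erase j) := by
  obtain ⟨hnd, rfl, hord⟩ := hL
  refine ⟨hnd.erase j, ?_, hord.sublist (L.erase_sublist)⟩
  ext a
  simp [hnd.mem_erase_iff]

theorem ready_nonempty {U : Finset ι} (hne : (feasibleOrders P U).Nonempty) (hU : U.Nonempty) :
    (ready P U).Nonempty := by
  obtain ⟨L, hL⟩ := hne
  rw [feasibleOrders_eq_biUnion hU] at hL
  obtain ⟨j, hj, -⟩ := mem_iUnion₂.1 hL
  exact ⟨j, hj⟩

end Precedence

section Recursion

variable {ι : Type*} [DecidableEq ι] {P : ι → Finset ι} {τ μ : ι → ι → ℝ} {dk : ι}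
  {V : Finset ι → ι → ι → ℝ}

theorem isLeast_value_completionCost (hbase : V ∅ dk dk = 0)
    (hnext : ∀ U p f, f ≠ dk → ∀ h : (ready P U).Nonempty,
      V U p f = (ready P U).inf' h (fun j => τ p j + V (U.erase j) j f))
    (hclose : ∀ p f, f ≠ dk → V ∅ p f = μ p f + V ∅ dk dk)
    (U : Finset ι) (hne : (feasibleOrders P U).Nonempty) {p f : ι} (hf : f ≠ dk) :
    IsLeast (completionCost τ μ f p '' feasibleOrders P U) (V U p f) := by
  induction U using Finset.strongInduction generalizing p with
  | H U ih =>
  rcases U.eq_empty_or_nonempty with rfl | hU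
  · rw [feasibleOrders_empty, image_singleton, hclose p f hf, hbase, add_zero]
    exact isLeast_singleton
  · rw [hnext U p f hf (ready_nonempty hne hU), feasibleOrders_eq_biUnion hU, image_iUnion₂]
    refine isLeast_biUnion_inf' _ fun j hj => ?_
    have hjU : j ∈ U := (Finset.mem_filter.1 hj).1
    have hrest := ih _ (Finset.erase_ssubset hjU) ⟨_, erase_mem_feasibleOrders hne.some_mem j⟩
      (p := j)
    simpa only [completionCost, image_image, id_eq] using
      (monotone_id.const_add (τ p j)).map_isLeast hrest

end Recursion

theorem stmt15_general {ι : Type*} [DecidableEq ι] (Vk : Finset ι)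
    (dk : ι) (hdk : dk ∉ Vk)
    (τ μ : ι → ι → ℝ)
    (P : ι → Finset ι)
    (V : Finset ι → ι → ι → ℝ)
    (U1 : Finset ι → Finset ι)
    (hU1 : ∀ U, U1 U = U.filter (fun j => U ∩ P j = ∅))
    -- (20b-i): base case
    (hbase : V ∅ dk dk = 0)
    -- (20b-ii): assign the first task (`f = d_k`)
    (hfirst : ∀ U p, ∀ h : (U1 U).Nonempty,
      V U p dk = (U1 U).inf' h (fun j => V (U.erase j) j j))
    -- (20b-iii): assign the next task (`U₁ ≠ ∅`, `f ≠ d_k`)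
    (hnext : ∀ U p f, f ≠ dk → ∀ h : (U1 U).Nonempty,
      V U p f = (U1 U).inf' h (fun j => τ p j + V (U.erase j) j f))
    -- (20b-iv): close the station (`U = ∅`, `f ≠ d_k`)
    (hclose : ∀ p f, f ≠ dk → V ∅ p f = μ p f + V ∅ dk dk)
    -- at least one feasible sequence exists (the precedence graph is acyclic)
    (hfeas : ∃ L : List ι, L.Nodup ∧ L.toFinset = Vk ∧ FeasibleSeq P L) :
    IsLeast {x : ℝ | ∃ L : List ι, L.Nodup ∧ L.toFinset = Vk ∧ FeasibleSeq P L ∧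
        x = seqCost τ μ L}
      (V Vk dk dk) := by
  obtain rfl : U1 = ready P := funext hU1
  obtain ⟨L₀, hL₀, hL₀Vk, hfeas₀⟩ := hfeas
  have hPVk : ∀ i ∈ Vk, P i ⊆ Vk := hL₀Vk ▸ hfeas₀.subset_toFinset
  have hcosts : {x : ℝ | ∃ L : List ι, L.Nodup ∧ L.toFinset = Vk ∧ FeasibleSeq P L ∧
      x = seqCost τ μ L} = seqCost τ μ '' feasibleOrders P Vk := by
    ext x
    simp only [feasibleOrders, mem_image, mem_ofPred_eq, eq_comm (a := x), and_assoc]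
    refine exists_congr fun L => and_congr_right fun hnd => and_congr_right fun hL => ?_
    rw [feasibleSeq_iff_precOrdered hnd (hL ▸ hPVk)]
  have hne : (feasibleOrders P Vk).Nonempty :=
    ⟨L₀, hL₀, hL₀Vk, (feasibleSeq_iff_precOrdered hL₀ hfeas₀.subset_toFinset).1 hfeas₀⟩
  rw [hcosts]
  rcases Vk.eq_empty_or_nonempty with rfl | hVk
  · rw [feasibleOrders_empty, image_singleton, hbase]
    exact isLeast_singleton
  rw [hfirst Vk dk (ready_nonempty hne hVk), feasibleOrders_eq_biUnion hVk, image_iUnion₂]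
  refine isLeast_biUnion_inf' _ fun j hj => ?_
  have hjdk : j ≠ dk := ne_of_mem_of_not_mem (Finset.mem_filter.1 hj).1 hdk
  simpa only [image_image, seqCost_cons] using isLeast_value_completionCost hbase hnext hclose
    _ ⟨_, erase_mem_feasibleOrders hne.some_mem j⟩ hjdk

/-- Correctness of the single-station re-sequencing DIDP
recursion (20b): for any value function `V` on states `(U, p, f)` satisfying the
recursion, the value `V V_k d_k d_k` is the minimum, over all permutations
(duplicate-free lists) `L` of `V_k` consistent with the precedence relation `P`,
of the total setup cost `Σ_{l=1}^{n−1} τ_{L_l L_{l+1}} + μ_{L_n L_1}`. -/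
theorem stmt15 {ι : Type*} [DecidableEq ι] (Vk : Finset ι) (hVk : Vk.Nonempty)
    (dk : ι) (hdk : dk ∉ Vk)
    (τ μ : ι → ι → ℝ) (hτ : ∀ i j, 0 ≤ τ i j) (hμ : ∀ i j, 0 ≤ μ i j)
    (P : ι → Finset ι) (hP : ∀ i ∈ Vk, P i ⊆ Vk)
    (V : Finset ι → ι → ι → ℝ)
    (U1 : Finset ι → Finset ι)
    (hU1 : ∀ U, U1 U = U.filter (fun j => U ∩ P j = ∅))
    -- (20b-i): base case
    (hbase : V ∅ dk dk = 0)
    -- (20b-ii): assign the first task (`f = d_k`)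
    (hfirst : ∀ U p, ∀ h : (U1 U).Nonempty,
      V U p dk = (U1 U).inf' h (fun j => V (U.erase j) j j))
    -- (20b-iii): assign the next task (`U₁ ≠ ∅`, `f ≠ d_k`)
    (hnext : ∀ U p f, f ≠ dk → ∀ h : (U1 U).Nonempty,
      V U p f = (U1 U).inf' h (fun j => τ p j + V (U.erase j) j f))
    -- (20b-iv): close the station (`U = ∅`, `f ≠ d_k`)
    (hclose : ∀ p f, f ≠ dk → V ∅ p f = μ p f + V ∅ dk dk)
    -- at least one feasible sequence exists (the precedence graph is acyclic)
    (hfeas : ∃ L : List ι, L.Nodup ∧ L.toFinset = Vk ∧ FeasibleSeq P L) :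
    IsLeast {x : ℝ | ∃ L : List ι, L.Nodup ∧ L.toFinset = Vk ∧ FeasibleSeq P L ∧
        x = seqCost τ μ L}
      (V Vk dk dk) :=
  stmt15_general Vk dk hdk τ μ P V U1 hU1 hbase hfirst hnext hclose hfeas
end
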